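/- The exponential mechanism satisfies ε-differential privacy: selecting output r ∈ R with probability proportional to exp(ε·u(D,r)/(2Δu)), where Δu is the sensitivity of the utility u, satisfies that for all neighboring datasets D, D' and all r, Pr[M(D)=r] ≤ e^ε·Pr[M(D')=r]. -/
import Mathlib


open scoped BigOperators

/-- The exponential mechanism: on dataset `x`, output `r` is selected with
probability proportional to `exp(ε·u(x,r)/(2Δu))`. -/
noncomputable def expMech {D R : Type*} [Fintype R] (u : D → R → ℝ)
    (Δu ε : ℝ) (x : D) (r : R) : ℝ :=
  Real.exp (ε * u x r / (2 * Δu)) / ∑ r' : R, Real.exp (ε * u x r' / (2 * Δu))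

/-- the exponential mechanism satisfies `ε`-differential privacy:
if `Δu` bounds the sensitivity of the utility function `u`, i.e.
`|u x r − u x' r| ≤ Δu` for all outputs `r` and all neighboring `x, x'`, then
selecting `r` with probability proportional to `exp(ε·u(x,r)/(2Δu))` satisfies
`Pr[M x = r] ≤ e^ε · Pr[M x' = r]` for all neighboring `x, x'` and all `r`. -/
theorem exponential_mechanism_private
    {D R : Type*} [Fintype R] [Nonempty R]
    (Neighbor : D → D → Prop) (u : D → R → ℝ) (Δu ε : ℝ)
    (hΔu : 0 < Δu) (hε : 0 < ε)
    (hsens : ∀ r : R, ∀ x x', Neighbor x x' → |u x r - u x' r| ≤ Δu) :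
    ∀ x x', Neighbor x x' → ∀ r : R,
      expMech u Δu ε x r ≤ Real.exp ε * expMech u Δu ε x' r := by
  intro x x' hN r
  set a : R → ℝ := fun s => ε * u x s / (2 * Δu) with ha
  set b : R → ℝ := fun s => ε * u x' s / (2 * Δu) with hb
  have h2Δ : 0 < 2 * Δu := by linarith
  -- key bound: a s - b s ≤ ε/2 and b s - a s ≤ ε/2
  have key : ∀ s : R, a s - b s ≤ ε / 2 ∧ b s - a s ≤ ε / 2 := by
    intro s
    have h := hsens s x x' hN
    have h1 := abs_le.mp h
    constructor
    · have : a s - b s = ε * (u x s - u x' s) / (2 * Δu) := by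
        simp only [ha, hb]; ring
      rw [this]
      rw [div_le_iff₀ h2Δ]
      nlinarith [h1.2]
    · have : b s - a s = ε * (u x' s - u x s) / (2 * Δu) := by
        simp only [ha, hb]; ring
      rw [this]
      rw [div_le_iff₀ h2Δ]
      nlinarith [h1.1]
  have Sx_pos : 0 < ∑ r' : R, Real.exp (a r') :=
    Finset.sum_pos (fun i _ => Real.exp_pos _) Finset.univ_nonempty
  have Sx'_pos : 0 < ∑ r' : R, Real.exp (b r') :=
    Finset.sum_pos (fun i _ => Real.exp_pos _) Finset.univ_nonempty
  have hnum : Real.exp (a r) ≤ Real.exp (ε / 2) * Real.exp (b r) := by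
    rw [← Real.exp_add, Real.exp_le_exp]
    linarith [(key r).1]
  have hden : ∑ r' : R, Real.exp (b r') ≤ Real.exp (ε / 2) * ∑ r' : R, Real.exp (a r') := by
    rw [Finset.mul_sum]
    apply Finset.sum_le_sum
    intro i _
    rw [← Real.exp_add, Real.exp_le_exp]
    linarith [(key i).2]
  have hgoal : Real.exp (a r) / ∑ r' : R, Real.exp (a r') ≤
      Real.exp ε * (Real.exp (b r) / ∑ r' : R, Real.exp (b r')) := by
    rw [div_le_iff₀ Sx_pos]
    have h1 : Real.exp (a r) * (∑ r' : R, Real.exp (b r')) ≤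
        Real.exp ε * Real.exp (b r) * ∑ r' : R, Real.exp (a r') := by
      calc Real.exp (a r) * (∑ r' : R, Real.exp (b r'))
          ≤ (Real.exp (ε/2) * Real.exp (b r)) * (Real.exp (ε/2) * ∑ r' : R, Real.exp (a r')) := by
            apply mul_le_mul hnum hden (le_of_lt Sx'_pos)
            positivity
        _ = Real.exp ε * Real.exp (b r) * ∑ r' : R, Real.exp (a r') := by
            rw [show (Real.exp (ε/2) * Real.exp (b r)) * (Real.exp (ε/2) * ∑ r' : R, Real.exp (a r'))
              = (Real.exp (ε/2) * Real.exp (ε/2)) * Real.exp (b r) * ∑ r' : R, Real.exp (a r') by ring,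
              ← Real.exp_add]
            norm_num
    calc Real.exp (a r) = (Real.exp (a r) * ∑ r' : R, Real.exp (b r')) / ∑ r' : R, Real.exp (b r') := by
          field_simp
      _ ≤ (Real.exp ε * Real.exp (b r) * ∑ r' : R, Real.exp (a r')) / ∑ r' : R, Real.exp (b r') := by
          gcongr
      _ = Real.exp ε * (Real.exp (b r) / ∑ r' : R, Real.exp (b r')) * ∑ r' : R, Real.exp (a r') := by
          ring
  simpa [expMech, ha, hb] using hgoal
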